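/- For every s ∈ ℂ with Re(s) > d + |μ| one has the Mellin-transform identity π^{−s} Γ(s) K^μ(H,z,w,s,Λ) = ∫₀^∞ ( θ^μ_t(H,z,w,Λ) − δ_{μ,z,Λ} · e^{−2πi⟨z,w⟩} ) t^{s−1} dt, both sides being absolutely convergent in this range. -/

import Mathlib

open scoped Real
open Complex MeasureTheory Filter

noncomputable section

/-- The diagonal Hermitian form `H(z,w) = ∑ i, h i * z i * conj (w i)` on `ℂ^d`. -/
def hermH {d : ℕ} (h : Fin d → ℝ) (z w : Fin d → ℂ) : ℂ :=
  ∑ i, (h i : ℂ) * z i * (starRingEnd ℂ) (w i)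

/-- The squared norm `|z|_H² = ∑ i, h i * |z i|²` associated to `H`. -/
def normHsq {d : ℕ} (h : Fin d → ℝ) (z : Fin d → ℂ) : ℝ :=
  ∑ i, h i * Complex.normSq (z i)

/-- The alternating form `⟨z,w⟩ = Im H(z,w)`. -/
def pairH {d : ℕ} (h : Fin d → ℝ) (z w : Fin d → ℂ) : ℝ := (hermH h z w).im

/-- The general term of the Eisenstein–Kronecker series:
`conj (z+λ)^μ ⬝ |z+λ|_H^(-2s) ⬝ e^{2πi⟨λ,w⟩}`. -/
def Kterm {d : ℕ} (h : Fin d → ℝ) (μ : Fin d → ℕ) (z w : Fin d → ℂ) (s : ℂ)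
    (l : Fin d → ℂ) : ℂ :=
  (∏ i, (starRingEnd ℂ) (z i + l i) ^ μ i) *
    ((normHsq h (z + l) : ℂ) ^ (-s)) *
    Complex.exp (2 * (π : ℂ) * Complex.I * (pairH h l w : ℂ))

/-- The general term of the theta series:
`conj (z+λ)^μ ⬝ e^{-πt|z+λ|_H²} ⬝ e^{2πi⟨λ,w⟩}`. -/
def thetaTerm {d : ℕ} (h : Fin d → ℝ) (μ : Fin d → ℕ) (t : ℝ) (z w : Fin d → ℂ)
    (l : Fin d → ℂ) : ℂ :=
  (∏ i, (starRingEnd ℂ) (z i + l i) ^ μ i) *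
    Complex.exp ((-(π * t * normHsq h (z + l)) : ℝ) : ℂ) *
    Complex.exp (2 * (π : ℂ) * Complex.I * (pairH h l w : ℂ))

lemma pairH_add_left {d : ℕ} (h : Fin d → ℝ) (a b w : Fin d → ℂ) :
    pairH h (a + b) w = pairH h a w + pairH h b w := by
  unfold pairH hermH
  rw [← Complex.add_im]
  congr 1
  rw [← Finset.sum_add_distrib]
  refine Finset.sum_congr rfl fun i _ => ?_
  rw [Pi.add_apply]
  ring

lemma pairH_zsmul_left {d : ℕ} (h : Fin d → ℝ) (n : ℤ) (a w : Fin d → ℂ) :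
    pairH h (n • a) w = (n : ℝ) * pairH h a w := by
  unfold pairH hermH
  have key : (∑ i, (h i : ℂ) * (n • a) i * (starRingEnd ℂ) (w i))
      = (n : ℂ) * ∑ i, (h i : ℂ) * a i * (starRingEnd ℂ) (w i) := by
    rw [Finset.mul_sum]
    refine Finset.sum_congr rfl fun i _ => ?_
    rw [Pi.smul_apply, zsmul_eq_mul]
    ring
  rw [key, Complex.mul_im]
  simp

/-- The dual lattice `Λ* = {l : ⟨l, Λ⟩ ⊆ ℤ}` with respect to `⟨·,·⟩ = Im H`. -/
def dualLattice {d : ℕ} (h : Fin d → ℝ) (Λ : Submodule ℤ (Fin d → ℂ)) :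
    Submodule ℤ (Fin d → ℂ) where
  carrier := {l | ∀ x ∈ Λ, ∃ n : ℤ, pairH h l x = (n : ℝ)}
  zero_mem' := by
    intro x _
    exact ⟨0, by simp [pairH, hermH]⟩
  add_mem' := by
    intro a b ha hb x hx
    obtain ⟨m, hm⟩ := ha x hx
    obtain ⟨n, hn⟩ := hb x hx
    exact ⟨m + n, by rw [pairH_add_left, hm, hn]; push_cast; ring⟩
  smul_mem' := by
    intro n a ha x hx
    obtain ⟨m, hm⟩ := ha x hx
    exact ⟨n * m, by rw [pairH_zsmul_left, hm]; push_cast; ring⟩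

/-- The volume of `ℂ^d/Λ` with respect to the metric induced by `H`, i.e. `(∏ i, h i)`
times the Euclidean covolume of `Λ`. -/
def covolH {d : ℕ} (h : Fin d → ℝ) (Λ : Submodule ℤ (Fin d → ℂ)) : ℝ :=
  (∏ i, h i) * ZLattice.covolume Λ

open Classical in
/-- `δ_{μ,v,M} = 1` if `v ∈ M` and `|μ| = 0`, and `0` otherwise. -/
def deltaEK {d : ℕ} (μ : Fin d → ℕ) (v : Fin d → ℂ) (M : Submodule ℤ (Fin d → ℂ)) : ℂ :=
  if v ∈ M ∧ ∑ i, μ i = 0 then 1 else 0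

end

/-!
Write `a_λ = conj(z+λ)^μ e^{2πi⟨λ,w⟩}` and `p_λ = |z+λ|_H²`. The theta series is the
Dirichlet-type series `∑ a_λ e^{-π p_λ t}`, whose only term with `p_λ = 0` (at `λ = -z`, present
iff `z ∈ Λ`) is the constant `δ_{μ,z,Λ} e^{-2πi⟨z,w⟩}`. Since
`∫₀^∞ e^{-π p t} t^{s-1} dt = π^{-s} Γ(s) p^{-s}`, integrating term by term gives the identity as
soon as `∑ |a_λ| p_λ^{-Re s}` converges, and this sum also dominates the integral of the absolute
value of the integrand. Its convergence follows from `|a_λ| ≤ ‖z+λ‖^{|μ|}`,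
`p_λ ≥ c ‖z+λ‖²` and the convergence of `∑_λ ‖z+λ‖^{-r}` over a lattice of rank `2d` for
`r > 2d`; comparing `e^{-x} ≤ k!/x^k` with it for an integer `k > d + |μ|` makes the theta series
converge.
-/

open Set

section Forms

variable {d : ℕ} {h : Fin d → ℝ}

lemma normHsq_zero (h : Fin d → ℝ) : normHsq h 0 = 0 := by
  simp [normHsq]

lemma normHsq_nonneg (hpos : ∀ i, 0 < h i) (v : Fin d → ℂ) : 0 ≤ normHsq h v :=
  Finset.sum_nonneg fun i _ => mul_nonneg (hpos i).le (Complex.normSq_nonneg _)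

lemma exists_pos_mul_sq_norm_le_normHsq (hpos : ∀ i, 0 < h i) :
    ∃ c > 0, ∀ v : Fin d → ℂ, c * ‖v‖ ^ 2 ≤ normHsq h v := by
  -- `c ≤ h i` for all `i`; unlike `min h i`, it is also defined (and positive) when `d = 0`
  have hS : 0 ≤ ∑ i, (h i)⁻¹ := Finset.sum_nonneg fun i _ => (inv_pos.2 (hpos i)).le
  set c := (1 + ∑ i, (h i)⁻¹)⁻¹
  have hc : 0 < c := inv_pos.2 (by linarith)
  refine ⟨c, hc, fun v => ?_⟩
  have hc_le : ∀ i, c ≤ h i := fun i => by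
    refine inv_le_of_inv_le₀ (hpos i) ?_
    have := Finset.single_le_sum (fun j _ => (inv_pos.2 (hpos j)).le) (Finset.mem_univ i)
    linarith
  have hcoord : ∀ i, ‖v i‖ ^ 2 ≤ normHsq h v / c := fun i => by
    rw [le_div_iff₀ hc, Complex.sq_norm, mul_comm]
    calc c * Complex.normSq (v i) ≤ h i * Complex.normSq (v i) :=
          mul_le_mul_of_nonneg_right (hc_le i) (Complex.normSq_nonneg _)
      _ ≤ normHsq h v := Finset.single_le_sum
          (f := fun j => h j * Complex.normSq (v j))
          (fun j _ => mul_nonneg (hpos j).le (Complex.normSq_nonneg _)) (Finset.mem_univ i)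
  have hN : 0 ≤ normHsq h v / c := div_nonneg (normHsq_nonneg hpos v) hc.le
  have : ‖v‖ ≤ √(normHsq h v / c) :=
    (pi_norm_le_iff_of_nonneg (Real.sqrt_nonneg _)).2 fun i =>
      (Real.le_sqrt (norm_nonneg _) hN).2 (hcoord i)
  rw [← le_div_iff₀' hc]
  exact (Real.le_sqrt (norm_nonneg _) hN).1 this

lemma normHsq_eq_zero_iff (hpos : ∀ i, 0 < h i) {v : Fin d → ℂ} : normHsq h v = 0 ↔ v = 0 := by
  refine ⟨fun hv => ?_, fun hv => hv ▸ normHsq_zero h⟩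
  obtain ⟨c, hc, hcH⟩ := exists_pos_mul_sq_norm_le_normHsq hpos
  have hsq : ‖v‖ ^ 2 ≤ 0 := nonpos_of_mul_nonpos_right (hv ▸ hcH v) hc
  simpa using le_antisymm hsq (sq_nonneg _)

lemma pairH_neg_left (h : Fin d → ℝ) (a w : Fin d → ℂ) : pairH h (-a) w = -pairH h a w := by
  simp [pairH, hermH, Finset.sum_neg_distrib]

end Forms

section Coefficients

variable {d : ℕ} (h : Fin d → ℝ) (μ : Fin d → ℕ) (z w : Fin d → ℂ)

noncomputable def ekCoeff (l : Fin d → ℂ) : ℂ :=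
  (∏ i, (starRingEnd ℂ) (z i + l i) ^ μ i) *
    Complex.exp (2 * (π : ℂ) * Complex.I * (pairH h l w : ℂ))

lemma Kterm_eq_ekCoeff_div (s : ℂ) (l : Fin d → ℂ) :
    Kterm h μ z w s l = ekCoeff h μ z w l / (normHsq h (z + l) : ℂ) ^ s := by
  rw [Kterm, ekCoeff, Complex.cpow_neg]
  ring

lemma thetaTerm_eq_ekCoeff_mul (t : ℝ) (l : Fin d → ℂ) :
    thetaTerm h μ t z w l = ekCoeff h μ z w l * Real.exp (-π * normHsq h (z + l) * t) := by
  rw [thetaTerm, ekCoeff, Complex.ofReal_exp]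
  push_cast
  ring_nf

lemma norm_ekCoeff_le (l : Fin d → ℂ) : ‖ekCoeff h μ z w l‖ ≤ ‖z + l‖ ^ ∑ i, μ i := by
  have hexp : ‖Complex.exp (2 * (π : ℂ) * Complex.I * (pairH h l w : ℂ))‖ = 1 := by
    rw [← Complex.norm_exp_ofReal_mul_I (2 * π * pairH h l w)]
    push_cast
    ring_nf
  rw [ekCoeff, norm_mul, hexp, mul_one, norm_prod, ← Finset.prod_pow_eq_pow_sum]
  refine Finset.prod_le_prod (fun i _ => norm_nonneg _) fun i _ => ?_
  rw [norm_pow, Complex.norm_conj]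
  exact pow_le_pow_left₀ (norm_nonneg _) (norm_le_pi_norm (z + l) i) _

lemma norm_Kterm {s : ℂ} (hpos : ∀ i, 0 < h i) (hs : s.re ≠ 0) (l : Fin d → ℂ) :
    ‖Kterm h μ z w s l‖ = ‖ekCoeff h μ z w l‖ / normHsq h (z + l) ^ s.re := by
  rw [Kterm_eq_ekCoeff_div, norm_div,
    Complex.norm_cpow_eq_rpow_re_of_nonneg (normHsq_nonneg hpos _) hs]

lemma norm_thetaTerm (t : ℝ) (l : Fin d → ℂ) :
    ‖thetaTerm h μ t z w l‖ = ‖ekCoeff h μ z w l‖ * Real.exp (-π * normHsq h (z + l) * t) := by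
  rw [thetaTerm_eq_ekCoeff_mul, norm_mul, Complex.norm_real,
    Real.norm_of_nonneg (Real.exp_nonneg _)]

lemma thetaTerm_of_add_eq_zero (t : ℝ) {l : Fin d → ℂ} (hl : z + l = 0) :
    thetaTerm h μ t z w l = (if ∑ i, μ i = 0 then 1 else 0) *
      Complex.exp (-(2 * (π : ℂ) * Complex.I * (pairH h z w : ℂ))) := by
  obtain rfl : l = -z := eq_neg_of_add_eq_zero_right hl
  have hzi : ∀ i, z i + (-z) i = 0 := fun i => by simp
  simp only [thetaTerm, hzi, map_zero]
  rw [Finset.prod_pow_eq_pow_sum, zero_pow_eq, hl, normHsq_zero, pairH_neg_left]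
  push_cast
  simp

lemma Real.exp_neg_le_factorial_div_pow {x : ℝ} (hx : 0 < x) (k : ℕ) :
    Real.exp (-x) ≤ k.factorial / x ^ k := by
  rw [Real.exp_neg, ← inv_div]
  exact inv_anti₀ (by positivity) (Real.pow_div_factorial_le_exp _ hx.le k)

lemma finrank_int_eq_of_isZLattice {d : ℕ} (Λ : Submodule ℤ (Fin d → ℂ)) [DiscreteTopology Λ]
    [IsZLattice ℝ Λ] : Module.finrank ℤ Λ = 2 * d := by
  rw [ZLattice.rank ℝ Λ, Module.finrank_pi_fintype ℝ]
  simp [mul_comm]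

section Summability

variable {d : ℕ} {h : Fin d → ℝ} {μ : Fin d → ℕ} {z w : Fin d → ℂ}

lemma norm_ekCoeff_div_rpow_le {c σ : ℝ} (hc : 0 < c)
    (hcH : ∀ v : Fin d → ℂ, c * ‖v‖ ^ 2 ≤ normHsq h v) (hσ : ∑ i, (μ i : ℝ) < 2 * σ)
    (l : Fin d → ℂ) :
    ‖ekCoeff h μ z w l‖ / normHsq h (z + l) ^ σ ≤
      c ^ (-σ) * ‖z + l‖ ^ ((∑ i, (μ i : ℝ)) - 2 * σ) := by
  have hσ0 : 0 < σ := by linarith [(by positivity : 0 ≤ ∑ i, (μ i : ℝ))]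
  rcases eq_or_ne (z + l) 0 with hv | hv
  · rw [hv, normHsq_zero, Real.zero_rpow hσ0.ne', div_zero]
    positivity
  have hv' : 0 < ‖z + l‖ := norm_pos_iff.2 hv
  have hlow : c ^ σ * ‖z + l‖ ^ (2 * σ) ≤ normHsq h (z + l) ^ σ := by
    calc c ^ σ * ‖z + l‖ ^ (2 * σ) = (c * ‖z + l‖ ^ 2) ^ σ := by
          rw [Real.mul_rpow hc.le (by positivity), ← Real.rpow_natCast, ← Real.rpow_mul hv'.le]
          norm_num
      _ ≤ normHsq h (z + l) ^ σ := Real.rpow_le_rpow (by positivity) (hcH _) hσ0.le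
  calc ‖ekCoeff h μ z w l‖ / normHsq h (z + l) ^ σ
      ≤ ‖z + l‖ ^ (∑ i, (μ i : ℝ)) / (c ^ σ * ‖z + l‖ ^ (2 * σ)) := by
        rw [← Nat.cast_sum, Real.rpow_natCast]
        exact div_le_div₀ (by positivity) (norm_ekCoeff_le h μ z w l) (by positivity) hlow
    _ = c ^ (-σ) * ‖z + l‖ ^ ((∑ i, (μ i : ℝ)) - 2 * σ) := by
        rw [Real.rpow_sub hv', Real.rpow_neg hc.le]
        field_simp

lemma norm_thetaTerm_le_factorial_mul (hpos : ∀ i, 0 < h i) {t : ℝ} (ht : 0 < t) (k : ℕ)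
    {l : Fin d → ℂ} (hl : z + l ≠ 0) :
    ‖thetaTerm h μ t z w l‖ ≤
      k.factorial / (π * t) ^ k * (‖ekCoeff h μ z w l‖ / normHsq h (z + l) ^ (k : ℝ)) := by
  have hp : 0 < normHsq h (z + l) :=
    (normHsq_nonneg hpos _).lt_of_ne' (mt (normHsq_eq_zero_iff hpos).1 hl)
  rw [norm_thetaTerm, Real.rpow_natCast]
  calc ‖ekCoeff h μ z w l‖ * Real.exp (-π * normHsq h (z + l) * t)
      ≤ ‖ekCoeff h μ z w l‖ * (k.factorial / (π * normHsq h (z + l) * t) ^ k) := by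
        rw [neg_mul, neg_mul]
        gcongr
        exact Real.exp_neg_le_factorial_div_pow (by positivity) k
    _ = k.factorial / (π * t) ^ k * (‖ekCoeff h μ z w l‖ / normHsq h (z + l) ^ k) := by
        rw [mul_right_comm π, mul_pow]
        ring

variable (Λ : Submodule ℤ (Fin d → ℂ)) [DiscreteTopology Λ] [IsZLattice ℝ Λ]

theorem summable_norm_ekCoeff_div_rpow (hpos : ∀ i, 0 < h i) {σ : ℝ}
    (hσ : (d : ℝ) + ∑ i, (μ i : ℝ) < σ) :
    Summable fun l : Λ => ‖ekCoeff h μ z w l‖ / normHsq h (z + l) ^ σ := by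
  obtain ⟨c, hc, hcH⟩ := exists_pos_mul_sq_norm_le_normHsq hpos
  have hμ0 : 0 ≤ ∑ i, (μ i : ℝ) := by positivity
  have hr : (∑ i, (μ i : ℝ)) - 2 * σ < -(Module.finrank ℤ Λ : ℝ) := by
    rw [finrank_int_eq_of_isZLattice]
    push_cast
    linarith
  refine .of_nonneg_of_le
    (fun l => div_nonneg (norm_nonneg _) (Real.rpow_nonneg (normHsq_nonneg hpos _) _))
    (fun l => ?_) ((ZLattice.summable_norm_sub_rpow Λ _ hr (-z)).mul_left (c ^ (-σ)))
  rw [sub_neg_eq_add, add_comm (l : Fin d → ℂ)]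
  exact norm_ekCoeff_div_rpow_le hc hcH (by linarith) l

theorem summable_thetaTerm (hpos : ∀ i, 0 < h i) {t : ℝ} (ht : 0 < t) :
    Summable fun l : Λ => thetaTerm h μ t z w l := by
  obtain ⟨k, hk⟩ := exists_nat_gt ((d : ℝ) + ∑ i, (μ i : ℝ))
  have hsub : {l : Λ | (l : Fin d → ℂ) = -z}.Subsingleton := fun l₁ h₁ l₂ h₂ =>
    Subtype.ext (h₁.trans h₂.symm)
  refine .of_norm_bounded_eventually
    ((summable_norm_ekCoeff_div_rpow (z := z) (w := w) Λ hpos hk).mul_left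
      (k.factorial / (π * t) ^ k))
    (eventually_cofinite.2 (hsub.finite.subset fun l hl => ?_))
  by_contra hl₀
  exact hl (norm_thetaTerm_le_factorial_mul hpos ht k
    fun h0 => hl₀ (eq_neg_of_add_eq_zero_right h0))

end Summability

section Mellin

theorem MeasureTheory.integrable_tsum_of_summable_integral_norm {ι α E : Type*} [Countable ι]
    [MeasurableSpace α] {μ : Measure α} [NormedAddCommGroup E] [CompleteSpace E]
    [SecondCountableTopology E] [MeasurableSpace E] [BorelSpace E] {F : ι → α → E}
    (hF_int : ∀ i, Integrable (F i) μ) (hF_sum : Summable fun i ↦ ∫ a, ‖F i a‖ ∂μ) :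
    Integrable (fun a ↦ ∑' i, F i a) μ := by
  refine ⟨(AEMeasurable.tsum fun i => (hF_int i).aemeasurable).aestronglyMeasurable, ?_⟩
  calc ∫⁻ a, ‖∑' i, F i a‖ₑ ∂μ ≤ ∫⁻ a, ∑' i, ‖F i a‖ₑ ∂μ :=
        lintegral_mono fun a => enorm_tsum_le_tsum_enorm
    _ = ∑' i, ∫⁻ a, ‖F i a‖ₑ ∂μ := lintegral_tsum fun i => (hF_int i).aestronglyMeasurable.enorm
    _ = ENNReal.ofReal (∑' i, ∫ a, ‖F i a‖ ∂μ) := by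
        rw [ENNReal.ofReal_tsum_of_nonneg (fun i => integral_nonneg fun a => norm_nonneg _) hF_sum]
        simp_rw [ofReal_integral_norm_eq_lintegral_enorm (hF_int _)]
    _ < ⊤ := ENNReal.ofReal_lt_top

variable {s : ℂ} {c : ℝ}

lemma norm_cpow_mul_exp_neg_mul {t : ℝ} (ht : 0 < t) :
    ‖(t : ℂ) ^ (s - 1) * Real.exp (-(c * t))‖ = t ^ (s.re - 1) * Real.exp (-(c * t)) := by
  rw [norm_mul, Complex.norm_cpow_eq_rpow_re_of_pos ht, Complex.norm_real,
    Real.norm_of_nonneg (Real.exp_nonneg _), Complex.sub_re, Complex.one_re]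

lemma integrableOn_cpow_mul_exp_neg_mul (hs : 0 < s.re) (hc : 0 < c) :
    IntegrableOn (fun t : ℝ => (t : ℂ) ^ (s - 1) * Real.exp (-(c * t))) (Ioi 0) := by
  have hreal : IntegrableOn (fun t : ℝ => t ^ (s.re - 1) * Real.exp (-(c * t))) (Ioi 0) := by
    simpa [Real.rpow_one] using
      integrableOn_rpow_mul_exp_neg_mul_rpow (by linarith : -1 < s.re - 1) one_pos hc
  refine hreal.mono' (by fun_prop) ?_
  filter_upwards [ae_restrict_mem measurableSet_Ioi] with t ht
  exact (norm_cpow_mul_exp_neg_mul ht).le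

lemma integral_norm_cpow_mul_exp_neg_mul (hs : 0 < s.re) (hc : 0 < c) :
    ∫ t in Ioi (0 : ℝ), ‖(t : ℂ) ^ (s - 1) * Real.exp (-(c * t))‖ =
      (1 / c) ^ s.re * Real.Gamma s.re := by
  rw [setIntegral_congr_fun measurableSet_Ioi fun t ht => norm_cpow_mul_exp_neg_mul ht,
    Real.integral_rpow_mul_exp_neg_mul_Ioi hs hc]

theorem mellinConvergent_of_hasSum_pi_mul₀ {ι : Type*} [Countable ι] {a : ι → ℂ} {p : ι → ℝ}
    {F : ℝ → ℂ} (hp : ∀ i, 0 ≤ p i) (hs : 0 < s.re)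
    (hF : ∀ t ∈ Ioi 0, HasSum (fun i ↦ if p i = 0 then 0 else a i * Real.exp (-π * p i * t)) (F t))
    (h_sum : Summable fun i ↦ ‖a i‖ / p i ^ s.re) :
    MellinConvergent F s := by
  let G : ι → ℝ → ℂ := fun i t =>
    (if p i = 0 then 0 else a i) * ((t : ℂ) ^ (s - 1) * Real.exp (-(π * p i * t)))
  have hG_int : ∀ i, IntegrableOn (G i) (Ioi 0) := fun i => by
    by_cases hpi : p i = 0
    · simp [G, hpi]
    · simp only [G, hpi, if_false]
      exact (integrableOn_cpow_mul_exp_neg_mul hs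
        (mul_pos Real.pi_pos ((hp i).lt_of_ne' hpi))).const_mul (a i)
  have hG_norm : ∀ i, ∫ t in Ioi (0 : ℝ), ‖G i t‖ ≤
      (1 / π) ^ s.re * Real.Gamma s.re * (‖a i‖ / p i ^ s.re) := fun i => by
    by_cases hpi : p i = 0
    · simp only [G, hpi, if_true, zero_mul, norm_zero, integral_zero]
      positivity
    · have hpi' : 0 < p i := (hp i).lt_of_ne' hpi
      simp only [G, hpi, if_false, norm_mul (a i), integral_const_mul]
      rw [integral_norm_cpow_mul_exp_neg_mul hs (mul_pos Real.pi_pos hpi'), one_div,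
        Real.inv_rpow (by positivity), Real.mul_rpow Real.pi_pos.le hpi'.le, one_div,
        Real.inv_rpow Real.pi_pos.le]
      apply le_of_eq
      field_simp
  have : IntegrableOn (fun t => ∑' i, G i t) (Ioi 0) :=
    integrable_tsum_of_summable_integral_norm hG_int <| .of_nonneg_of_le
      (fun i => integral_nonneg fun t => norm_nonneg _) hG_norm (h_sum.mul_left _)
  refine this.congr_fun (fun t ht => ?_) measurableSet_Ioi
  rw [← (hF t ht).tsum_eq, smul_eq_mul, ← tsum_mul_left]
  refine tsum_congr fun i => ?_
  split_ifs with hpi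
  · simp [G, hpi]
  · simp only [G, hpi, if_false, neg_mul]
    ring

end Mellin

section ThetaConstantTerm

variable {d : ℕ} {h : Fin d → ℝ} {μ : Fin d → ℕ} {z w : Fin d → ℂ}
  (Λ : Submodule ℤ (Fin d → ℂ))

lemma hasSum_ite_thetaTerm_of_add_eq_zero (t : ℝ) :
    HasSum (fun l : Λ => if z + (l : Fin d → ℂ) = 0 then thetaTerm h μ t z w l else 0)
      (deltaEK μ z Λ * Complex.exp (-(2 * (π : ℂ) * Complex.I * (pairH h z w : ℂ)))) := by
  by_cases hz : z ∈ Λ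
  · have := hasSum_single (f := fun l : Λ =>
        if z + (l : Fin d → ℂ) = 0 then thetaTerm h μ t z w l else 0) ⟨-z, neg_mem hz⟩
      fun l hl => if_neg fun h0 => hl (Subtype.ext (eq_neg_of_add_eq_zero_right h0))
    convert this using 1
    simp only [add_neg_cancel, if_true, thetaTerm_of_add_eq_zero h μ z w t (add_neg_cancel z),
      deltaEK, hz, true_and]
  · convert hasSum_zero using 1
    · funext l
      refine if_neg fun h0 => hz ?_
      rw [eq_neg_of_add_eq_zero_left h0]
      exact neg_mem l.2
    · simp [deltaEK, hz]

variable [DiscreteTopology Λ] [IsZLattice ℝ Λ]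

lemma hasSum_thetaTerm_sub_const (hpos : ∀ i, 0 < h i) {t : ℝ} (ht : 0 < t) :
    HasSum (fun l : Λ => if normHsq h (z + l) = 0 then 0 else
        ekCoeff h μ z w l * Real.exp (-π * normHsq h (z + l) * t))
      ((∑' l : Λ, thetaTerm h μ t z w l) -
        deltaEK μ z Λ * Complex.exp (-(2 * (π : ℂ) * Complex.I * (pairH h z w : ℂ)))) := by
  refine ((summable_thetaTerm Λ hpos ht).hasSum.sub
    (hasSum_ite_thetaTerm_of_add_eq_zero Λ t)).congr_fun fun l => ?_
  simp only [normHsq_eq_zero_iff hpos, thetaTerm_eq_ekCoeff_mul]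
  split_ifs <;> simp

end ThetaConstantTerm

theorem eisensteinKronecker_mellin_general
    {d : ℕ} (h : Fin d → ℝ) (hpos : ∀ i, 0 < h i)
    (Λ : Submodule ℤ (Fin d → ℂ)) [DiscreteTopology Λ] [IsZLattice ℝ Λ]
    (μ : Fin d → ℕ) (z w : Fin d → ℂ) (s : ℂ)
    (hs : (d : ℝ) + (∑ i, (μ i : ℝ)) < s.re) :
    (Summable fun l : {l : Λ // (l : Fin d → ℂ) ≠ -z} =>
        ‖Kterm h μ z w s ((l : Λ) : Fin d → ℂ)‖) ∧
    IntegrableOn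
      (fun t : ℝ =>
        ((∑' l : Λ, thetaTerm h μ t z w (l : Fin d → ℂ)) -
            deltaEK μ z Λ * Complex.exp (-(2 * (π : ℂ) * Complex.I * (pairH h z w : ℂ)))) *
          (t : ℂ) ^ (s - 1))
      (Set.Ioi (0 : ℝ)) MeasureTheory.volume ∧
    (π : ℂ) ^ (-s) * Complex.Gamma s * (∑' l : Λ, Kterm h μ z w s (l : Fin d → ℂ)) =
      ∫ t in Set.Ioi (0 : ℝ),
        ((∑' l : Λ, thetaTerm h μ t z w (l : Fin d → ℂ)) -
            deltaEK μ z Λ * Complex.exp (-(2 * (π : ℂ) * Complex.I * (pairH h z w : ℂ)))) *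
          (t : ℂ) ^ (s - 1) := by
  have hs0 : 0 < s.re := by linarith [(by positivity : (0 : ℝ) ≤ d + ∑ i, (μ i : ℝ))]
  have hp (l : Λ) : 0 ≤ normHsq h (z + l) := normHsq_nonneg hpos _
  have hsum := summable_norm_ekCoeff_div_rpow (z := z) (w := w) Λ hpos hs
  have hF (t : ℝ) (ht : t ∈ Ioi 0) :=
    hasSum_thetaTerm_sub_const (μ := μ) (z := z) (w := w) Λ hpos ht
  refine ⟨?_, ?_, ?_⟩
  · exact (hsum.comp_injective Subtype.val_injective).congr fun l =>
      (norm_Kterm h μ z w hpos hs0.ne' _).symm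
  · exact (mellinConvergent_of_hasSum_pi_mul₀ hp hs0 hF hsum).congr_fun
      (fun t _ => by simp only [smul_eq_mul, mul_comm]) measurableSet_Ioi
  · have key := hasSum_mellin_pi_mul₀ hp hs0 hF hsum
    simp_rw [mul_div_assoc, ← Kterm_eq_ekCoeff_div] at key
    rw [← tsum_mul_left, key.tsum_eq, mellin]
    exact setIntegral_congr_fun measurableSet_Ioi fun t _ => by rw [smul_eq_mul, mul_comm]

/-- For every `s` with `Re s > d + |μ|` one has
`π^{-s} Γ(s) K^μ(H,z,w,s,Λ) = ∫₀^∞ (θ^μ_t(H,z,w,Λ) - δ_{μ,z,Λ} e^{-2πi⟨z,w⟩}) t^{s-1} dt`,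
both sides being absolutely convergent in this range.  (Since `Re s > d ≥ 1 > 0`, the
term of the `K`-series at `λ = -z` vanishes, so the sum over all of `Λ` agrees with the
sum over `λ ≠ -z`.) -/
theorem eisensteinKronecker_mellin
    {d : ℕ} (hd : 1 ≤ d) (h : Fin d → ℝ) (hpos : ∀ i, 0 < h i)
    (Λ : Submodule ℤ (Fin d → ℂ)) [DiscreteTopology Λ] [IsZLattice ℝ Λ]
    (μ : Fin d → ℕ) (z w : Fin d → ℂ) (s : ℂ)
    (hs : (d : ℝ) + (∑ i, (μ i : ℝ)) < s.re) :
    (Summable fun l : {l : Λ // (l : Fin d → ℂ) ≠ -z} =>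
        ‖Kterm h μ z w s ((l : Λ) : Fin d → ℂ)‖) ∧
    IntegrableOn
      (fun t : ℝ =>
        ((∑' l : Λ, thetaTerm h μ t z w (l : Fin d → ℂ)) -
            deltaEK μ z Λ * Complex.exp (-(2 * (π : ℂ) * Complex.I * (pairH h z w : ℂ)))) *
          (t : ℂ) ^ (s - 1))
      (Set.Ioi (0 : ℝ)) MeasureTheory.volume ∧
    (π : ℂ) ^ (-s) * Complex.Gamma s * (∑' l : Λ, Kterm h μ z w s (l : Fin d → ℂ)) =
      ∫ t in Set.Ioi (0 : ℝ),
        ((∑' l : Λ, thetaTerm h μ t z w (l : Fin d → ℂ)) -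
            deltaEK μ z Λ * Complex.exp (-(2 * (π : ℂ) * Complex.I * (pairH h z w : ℂ)))) *
          (t : ℂ) ^ (s - 1) :=
  eisensteinKronecker_mellin_general h hpos Λ μ z w s hs
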